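/- arXiv:2009.08675 — 3 statements merged into one kernel-verified Lean document; each statement's English description precedes it below -/
import Mathlib

section
/- Let k[r] be a polynomial algebra over a field k with its standard ℤ-grading, and let M be a ℤ-graded k[r]-module on which r acts as a non-zero divisor. Then (r−1)·M[1/r] ∩ M = (r−1)·M, where M[1/r] denotes the localization of M at r and M is viewed as a submodule of M[1/r] via the (injective) localization map. -/
open Polynomial

/-- If `M` is a ℤ-graded module over `k[r]` (with `deg r = 1`) on which `r`
acts as a non-zero divisor, then `(r-1)·M[1/r] ∩ M = (r-1)·M` inside the localization
`M[1/r]`. -/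
theorem stmt1 (k : Type*) [Field k]
    (M : Type*) [AddCommGroup M] [Module k M] [Module (Polynomial k) M]
    [IsScalarTower k (Polynomial k) M]
    (ℳ : ℤ → Submodule k M) [DirectSum.Decomposition ℳ]
    (hgrade : ∀ d : ℤ, ∀ m ∈ ℳ d, (X : Polynomial k) • m ∈ ℳ (d + 1))
    (hreg : ∀ m : M, (X : Polynomial k) • m = 0 → m = 0) (m : M) :
    (∃ l : LocalizedModule (Submonoid.powers (X : Polynomial k)) M,
        LocalizedModule.mkLinearMap (Submonoid.powers (X : Polynomial k)) M m
          = ((X : Polynomial k) - 1) • l) ↔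
      ∃ m' : M, m = ((X : Polynomial k) - 1) • m' := by
  have hcancel : ∀ (j : ℕ) (a : M), (X : Polynomial k) ^ j • a = 0 → a = 0 := by
    intro j
    induction j with
    | zero => intro a h; simpa using h
    | succ j ih =>
      intro a h
      apply ih
      apply hreg
      rw [← mul_smul, mul_comm, ← pow_succ]
      exact h
  constructor
  · rintro ⟨l, hl⟩
    induction l using LocalizedModule.induction_on with
    | _ n s =>
      rw [LocalizedModule.smul'_mk] at hl
      rw [show (LocalizedModule.mkLinearMap (Submonoid.powers (X : Polynomial k)) M) m
          = LocalizedModule.mk m 1 from rfl, LocalizedModule.mk_eq] at hl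
      obtain ⟨u, hu⟩ := hl
      obtain ⟨t, ht⟩ := s.2
      obtain ⟨j, hj⟩ := u.2
      have hsmul : ∀ (v : Submonoid.powers (X : Polynomial k)) (a : M), v • a = (v : Polynomial k) • a := fun _ _ => rfl
      have ht' : (X : Polynomial k) ^ t = (s : Polynomial k) := ht
      have hj' : (X : Polynomial k) ^ j = (u : Polynomial k) := hj
      rw [hsmul, hsmul, hsmul, hsmul] at hu
      simp only [OneMemClass.coe_one, one_smul] at hu
      rw [← ht', ← hj'] at hu
      have key : (X : Polynomial k) ^ t • m = ((X : Polynomial k) - 1) • n := by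
        have : (X : Polynomial k) ^ j • ((X : Polynomial k) ^ t • m
            - ((X : Polynomial k) - 1) • n) = 0 := by
          rw [smul_sub, hu, sub_self]
        exact sub_eq_zero.mp (hcancel j _ this)
      refine ⟨n - (∑ i ∈ Finset.range t, (X : Polynomial k) ^ i) • m, ?_⟩
      rw [smul_sub, ← key, smul_smul, mul_comm, geom_sum_mul, sub_smul, one_smul, sub_sub_cancel]
  · rintro ⟨m', hm'⟩
    exact ⟨LocalizedModule.mkLinearMap _ M m', by rw [hm', map_smul]⟩
end

section
/- Let G be a group, H ≤ G a subgroup, and T ≤ H a subgroup with the following property: for every g ∈ G with g⁻¹Tg ⊆ H there exists h ∈ H with g⁻¹Tg = h⁻¹Th. Then: (1) the set of T-fixed points of the left G-action on the coset space G/H, namely {gH : tgH = gH for all t ∈ T}, is exactly the image of the normalizer N_G(T) in G/H, so N_G(T) acts transitively on it; and (2) the stabilizer in N_G(T) of the base coset eH is N_H(T) = N_G(T) ∩ H. -/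
/-! A coset `gH` is fixed by `T` exactly when `g⁻¹Tg ⊆ H`. The hypothesis then yields `h ∈ H` with
`g⁻¹Tg = h⁻¹Th`, so `gh⁻¹` normalizes `T` and represents the same coset. Conversely, for `n`
normalizing `T` we have `n⁻¹Tn = T ⊆ H`. The stabilizer of the base coset is `H` itself. -/

namespace Subgroup

variable {G : Type*} [Group G]

theorem smul_coe_eq_self_iff (H : Subgroup G) (t g : G) :
    t • (g : G ⧸ H) = g ↔ g⁻¹ * t * g ∈ H := by
  rw [MulAction.Quotient.smul_coe, smul_eq_mul, QuotientGroup.eq, ← H.inv_mem_iff]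
  simp only [mul_inv_rev, inv_inv, mul_assoc]

theorem exists_mem_eq_conj_iff (T : Subgroup G) (g x : G) :
    (∃ t ∈ T, x = g⁻¹ * t * g) ↔ g * x * g⁻¹ ∈ T := by
  constructor
  · rintro ⟨t, ht, rfl⟩
    simpa only [mul_assoc, mul_inv_cancel_left, mul_inv_cancel, mul_one] using ht
  · intro hx
    exact ⟨_, hx, by group⟩

theorem mul_inv_mem_normalizer_of_conj_mem_iff {T : Subgroup G} {g k : G}
    (h : ∀ x, g * x * g⁻¹ ∈ T ↔ k * x * k⁻¹ ∈ T) : g * k⁻¹ ∈ normalizer (T : Set G) := by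
  refine mem_normalizer_iff.2 fun t => ?_
  have hconj := h (k⁻¹ * t * k)
  simp only [mul_assoc, mul_inv_cancel_left, mul_inv_cancel, mul_one] at hconj
  simpa only [mul_inv_rev, inv_inv, mul_assoc] using hconj.symm

end Subgroup

open Subgroup in
/-- Let `T ≤ H ≤ G` be groups such that any conjugate `g⁻¹Tg` contained in
`H` is of the form `h⁻¹Th` for some `h ∈ H`. Then (1) the `T`-fixed points in `G/H` are
exactly the image of the normalizer `N_G(T)` (so `N_G(T)` acts transitively on them),
and (2) the stabilizer of the base coset in `N_G(T)` is `N_G(T) ∩ H`. -/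
theorem stmt6 (G : Type*) [Group G] (H T : Subgroup G) (hTH : T ≤ H)
    (hconj : ∀ g : G, (∀ t ∈ T, g⁻¹ * t * g ∈ H) →
      ∃ h ∈ H, ∀ x : G, (∃ t ∈ T, x = g⁻¹ * t * g) ↔ ∃ t ∈ T, x = h⁻¹ * t * h) :
    {x : G ⧸ H | ∀ t ∈ T, t • x = x} =
        (fun n : G => (n : G ⧸ H)) '' (Subgroup.normalizer (T : Set G) : Set G) ∧
      ∀ n ∈ Subgroup.normalizer (T : Set G),
        (n • ((1 : G) : G ⧸ H) = ((1 : G) : G ⧸ H) ↔ n ∈ Subgroup.normalizer (T : Set G) ⊓ H) := by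
  refine ⟨?_, fun n hn => ?_⟩
  · ext x
    constructor
    · induction x using QuotientGroup.induction_on with
      | H g =>
        intro hfix
        obtain ⟨h, hH, hiff⟩ := hconj g fun t ht => (smul_coe_eq_self_iff H t g).1 (hfix t ht)
        refine ⟨g * h⁻¹, mul_inv_mem_normalizer_of_conj_mem_iff fun x => ?_, ?_⟩
        · simpa only [exists_mem_eq_conj_iff] using hiff x
        · simpa [QuotientGroup.eq] using hH
    · rintro ⟨n, hn, rfl⟩ t ht
      exact (smul_coe_eq_self_iff H t n).2 (hTH ((mem_normalizer_iff''.1 hn t).1 ht))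
  · rw [← MulAction.mem_stabilizer_iff, MulAction.stabilizer_quotient, mem_inf]
    exact (and_iff_right hn).symm
end

section
/- Let k be a field, R a commutative k-algebra, u₀, ..., u_r ∈ R, and a₀, ..., a_r ∈ k² pairwise linearly independent vectors. For indices i < j < l set α_{ij} := det(a_i, a_j) and g_{(i,j,l)} := α_{jl}·u_i − α_{il}·u_j + α_{ij}·u_l. Then for all 0 ≤ i < j < l ≤ r with {i,j} ≠ {0,1}, the element g_{(i,j,l)} lies in the ideal of R generated by the elements g_{(0,1,m)} for 2 ≤ m ≤ r. Consequently the ideal (g_I : I ∈ 𝒥) generated by all trinomials over triples 0 ≤ i₁ < i₂ < i₃ ≤ r is generated by the g_{(0,1,m)}, 2 ≤ m ≤ r. -/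
/-- The trinomial `g_{(i,j,l)} = α_{jl}·u_i − α_{il}·u_j + α_{ij}·u_l`, where
`α_{ij} = det(a_i, a_j)`. -/
noncomputable def trin (k : Type*) [Field k] (R : Type*) [CommRing R] [Algebra k R]
    (u : ℕ → R) (a : ℕ → Fin 2 → k) (i j l : ℕ) : R :=
  algebraMap k R (a j 0 * a l 1 - a j 1 * a l 0) * u i
    - algebraMap k R (a i 0 * a l 1 - a i 1 * a l 0) * u j
    + algebraMap k R (a i 0 * a j 1 - a i 1 * a j 0) * u l

lemma det_ne {k : Type*} [Field k] (v w : Fin 2 → k) (h : LinearIndependent k ![v, w]) :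
    v 0 * w 1 - v 1 * w 0 ≠ 0 := by
  intro hd
  rw [LinearIndependent.pair_iff] at h
  have key : ∀ s t : k, s * v 0 + t * w 0 = 0 → s * v 1 + t * w 1 = 0 → s = 0 ∧ t = 0 := by
    intro s t h0 h1
    apply h s t
    funext x
    fin_cases x <;> simpa [Matrix.cons_val_zero, Matrix.cons_val_one]
  have h1 := key (w 1) (-(v 1)) (by linear_combination hd) (by ring)
  have h2 := key (w 0) (-(v 0)) (by ring) (by linear_combination -hd)
  have := key 1 0 (by rw [neg_eq_zero] at h2; simp [h2.2]) (by rw [neg_eq_zero] at h1; simp [h1.2])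
  exact one_ne_zero this.1

lemma trin_comb (k : Type*) [Field k] (R : Type*) [CommRing R] [Algebra k R]
    (u : ℕ → R) (a : ℕ → Fin 2 → k) (i j l : ℕ)
    (h01 : a 0 0 * a 1 1 - a 0 1 * a 1 0 ≠ 0) :
    trin k R u a i j l =
      algebraMap k R ((a j 0 * a l 1 - a j 1 * a l 0) / (a 0 0 * a 1 1 - a 0 1 * a 1 0))
          * trin k R u a 0 1 i
        - algebraMap k R ((a i 0 * a l 1 - a i 1 * a l 0) / (a 0 0 * a 1 1 - a 0 1 * a 1 0))
          * trin k R u a 0 1 j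
        + algebraMap k R ((a i 0 * a j 1 - a i 1 * a j 0) / (a 0 0 * a 1 1 - a 0 1 * a 1 0))
          * trin k R u a 0 1 l := by
  set d := a 0 0 * a 1 1 - a 0 1 * a 1 0 with hd
  have hmain : algebraMap k R d * trin k R u a i j l =
      algebraMap k R (a j 0 * a l 1 - a j 1 * a l 0) * trin k R u a 0 1 i
        - algebraMap k R (a i 0 * a l 1 - a i 1 * a l 0) * trin k R u a 0 1 j
        + algebraMap k R (a i 0 * a j 1 - a i 1 * a j 0) * trin k R u a 0 1 l := by
    simp only [trin, hd, map_sub, map_mul]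
    ring
  calc trin k R u a i j l
      = algebraMap k R (d⁻¹ * d) * trin k R u a i j l := by
        rw [inv_mul_cancel₀ h01, map_one, one_mul]
    _ = algebraMap k R d⁻¹ * (algebraMap k R d * trin k R u a i j l) := by
        rw [map_mul, mul_assoc]
    _ = _ := by
        rw [hmain]
        simp only [div_eq_mul_inv, map_mul, map_inv₀]
        ring

/-- For pairwise linearly independent `a₀,…,a_r ∈ k²` and `u₀,…,u_r ∈ R`,
every trinomial `g_{(i,j,l)}` (for `i < j < l ≤ r`) lies in the ideal generated by the
`g_{(0,1,m)}`, `2 ≤ m ≤ r`; consequently the ideal generated by all of the `g_I` is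
generated by the `g_{(0,1,m)}`. -/
theorem stmt9 (k : Type*) [Field k] (R : Type*) [CommRing R] [Algebra k R]
    (r : ℕ) (u : ℕ → R) (a : ℕ → Fin 2 → k)
    (ha : ∀ i j, i ≤ r → j ≤ r → i ≠ j → LinearIndependent k ![a i, a j]) :
    (∀ i j l : ℕ, i < j → j < l → l ≤ r →
      trin k R u a i j l ∈
        Ideal.span {x : R | ∃ m : ℕ, 2 ≤ m ∧ m ≤ r ∧ x = trin k R u a 0 1 m}) ∧
    Ideal.span {x : R | ∃ i j l : ℕ, i < j ∧ j < l ∧ l ≤ r ∧ x = trin k R u a i j l} =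
      Ideal.span {x : R | ∃ m : ℕ, 2 ≤ m ∧ m ≤ r ∧ x = trin k R u a 0 1 m} := by
  set S := {x : R | ∃ m : ℕ, 2 ≤ m ∧ m ≤ r ∧ x = trin k R u a 0 1 m} with hS
  have hm : ∀ m : ℕ, m ≤ r → trin k R u a 0 1 m ∈ Ideal.span S := by
    intro m hmr
    rcases Nat.lt_or_ge m 2 with h2 | h2
    · have : trin k R u a 0 1 m = 0 := by
        interval_cases m <;> (simp only [trin, map_sub, map_mul]; ring)
      rw [this]; exact Ideal.zero_mem _
    · exact Ideal.subset_span ⟨m, h2, hmr, rfl⟩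
  have part1 : ∀ i j l : ℕ, i < j → j < l → l ≤ r →
      trin k R u a i j l ∈ Ideal.span S := by
    intro i j l hij hjl hlr
    have h01 : a 0 0 * a 1 1 - a 0 1 * a 1 0 ≠ 0 :=
      det_ne (a 0) (a 1) (ha 0 1 (by omega) (by omega) (by omega))
    rw [trin_comb k R u a i j l h01]
    exact add_mem (sub_mem (Ideal.mul_mem_left _ _ (hm i (by omega)))
      (Ideal.mul_mem_left _ _ (hm j (by omega)))) (Ideal.mul_mem_left _ _ (hm l hlr))
  refine ⟨part1, le_antisymm ?_ (Ideal.span_mono ?_)⟩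
  · rw [Ideal.span_le]
    rintro x ⟨i, j, l, hij, hjl, hlr, rfl⟩
    exact part1 i j l hij hjl hlr
  · rintro x ⟨m, h2, hr, rfl⟩
    exact ⟨0, 1, m, by omega, by omega, hr, rfl⟩
end
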